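/- arXiv:1405.4426 — 2 statements merged into one kernel-verified Lean document; each statement's English description precedes it below -/
import Mathlib

section
/- Let H be a Hilbert space and S a non-negative self-adjoint operator on H with operator norm at most 1. If φ ∈ H has norm 1 and ‖Sφ‖ ≥ 1 - ε², then ⟨φ - Sφ, φ⟩ ≤ 2ε² and ‖φ - Sφ‖ ≤ 2ε. -/
/-!
A positive contraction satisfies `T² ≤ T`, i.e. `‖T x‖² ≤ re ⟪T x, x⟫`. Hence for a unit vector
`‖x - T x‖² ≤ re ⟪x - T x, x⟫ = 1 - re ⟪T x, x⟫ ≤ 1 - ‖T x‖² ≤ 2ε²`.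
-/

open scoped ComplexInnerProductSpace

namespace ContinuousLinearMap

open RCLike
open scoped InnerProductSpace

variable {𝕜 E : Type*} [RCLike 𝕜] [NormedAddCommGroup E] [InnerProductSpace 𝕜 E]
  {T : E →L[𝕜] E}

/-- Expand `0 ≤ re ⟪T (x - T x), x - T x⟫` and bound the `T³` term by `‖T x‖²`. -/
theorem IsPositive.norm_apply_sq_le_re_inner (hT : T.IsPositive) (hT₁ : ‖T‖ ≤ 1) (x : E) :
    ‖T x‖ ^ 2 ≤ re ⟪T x, x⟫_𝕜 := by
  have hcube : re ⟪T (T x), T x⟫_𝕜 ≤ ‖T x‖ ^ 2 :=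
    calc re ⟪T (T x), T x⟫_𝕜 ≤ ‖T (T x)‖ * ‖T x‖ := re_inner_le_norm _ _
      _ ≤ ‖T x‖ * ‖T x‖ := by
        gcongr
        simpa using T.le_of_opNorm_le hT₁ (T x)
      _ = ‖T x‖ ^ 2 := (sq _).symm
  have hnonneg := hT.re_inner_nonneg_left (x - T x)
  rw [map_sub, inner_sub_left, inner_sub_right, inner_sub_right,
    hT.inner_left_eq_inner_right (T x) x] at hnonneg
  simp only [map_sub, inner_self_eq_norm_sq] at hnonneg
  linarith

theorem IsPositive.norm_sub_apply_sq_le (hT : T.IsPositive) (hT₁ : ‖T‖ ≤ 1) (x : E) :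
    ‖x - T x‖ ^ 2 ≤ re ⟪x - T x, x⟫_𝕜 := by
  have := hT.norm_apply_sq_le_re_inner hT₁ x
  rw [norm_sub_sq (𝕜 := 𝕜), inner_sub_left, map_sub, inner_self_eq_norm_sq,
    inner_re_symm (𝕜 := 𝕜) x]
  linarith

theorem IsPositive.re_inner_sub_apply_le (hT : T.IsPositive) (hT₁ : ‖T‖ ≤ 1) {x : E}
    (hx : ‖x‖ = 1) {ε : ℝ} (h : 1 - ε ^ 2 ≤ ‖T x‖) :
    re ⟪x - T x, x⟫_𝕜 ≤ 2 * ε ^ 2 := by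
  have hTx := hT.norm_apply_sq_le_re_inner hT₁ x
  rw [inner_sub_left, map_sub, inner_self_eq_norm_sq, hx]
  nlinarith [norm_nonneg (T x)]

end ContinuousLinearMap

/-- If `S` is a non-negative self-adjoint operator of norm at most 1 on a complex Hilbert
space and `φ` is a unit vector with `‖S φ‖ ≥ 1 - ε²`, then `⟨φ - Sφ, φ⟩ ≤ 2ε²` and
`‖φ - Sφ‖ ≤ 2ε`. -/
theorem stmt0 {H : Type*} [NormedAddCommGroup H] [InnerProductSpace ℂ H] [CompleteSpace H]
    (S : H →L[ℂ] H) (hsa : IsSelfAdjoint S)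
    (hpos : ∀ x : H, 0 ≤ (⟪S x, x⟫ : ℂ).re)
    (hnorm : ‖S‖ ≤ 1)
    (φ : H) (hφ : ‖φ‖ = 1) (ε : ℝ) (hε : 0 ≤ ε)
    (h : 1 - ε ^ 2 ≤ ‖S φ‖) :
    (⟪φ - S φ, φ⟫ : ℂ).re ≤ 2 * ε ^ 2 ∧ ‖φ - S φ‖ ≤ 2 * ε := by
  have hS : S.IsPositive := ⟨hsa.isSymmetric, hpos⟩
  have hre := hS.re_inner_sub_apply_le hnorm hφ h
  refine ⟨hre, ?_⟩
  have hsq : ‖φ - S φ‖ ^ 2 ≤ (2 * ε) ^ 2 := by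
    nlinarith [hS.norm_sub_apply_sq_le hnorm φ]
  exact (pow_le_pow_iff_left₀ (norm_nonneg _) (by positivity) two_ne_zero).mp hsq
end

section
/- Let G be a unimodular locally compact group with Haar measure m, f ∈ L²(G) the density of a probability measure, and A ⊂ G a measurable set. Then ‖f * f‖₂ ≥ m(A·A)^{-1/2} (∫_A f dm)². Consequently, if ∫_A f dm > 1/K, m(A·A) ≤ K m(A), and m(A) ≤ K ‖f‖₂^{-2}, then ‖f * f‖₂ ≥ K^{-3} ‖f‖₂. -/
/-!
Put `F = ofReal ∘ f` and `ν = m.withDensity F`. Since `ν ∗ ν = m.withDensity (F ⋆ F)` is the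
push-forward of `ν × ν` under multiplication, `(∫_A f)² = (ν × ν)(A × A) ≤ (ν ∗ ν)(A·A)
= ∫_{A·A} F ⋆ F`, and Hölder on `A·A` bounds this by `‖F ⋆ F‖₂ m(A·A)^{1/2}`. Jensen's inequality
for `ν`, applied pointwise to `(F ⋆ F)(x) = ∫ F(y⁻¹x) dν(y)`, gives Young's inequality
`‖F ⋆ F‖₂ ≤ ‖F‖₁ ‖F‖₂`, so `‖f * f‖₂` is finite and the bound passes to real numbers. The second
claim is then arithmetic: `m(A·A) ≤ K² ‖f‖₂⁻²` while `(∫_A f)² > K⁻²`.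
-/

open MeasureTheory MeasureTheory.Measure Set
open scoped Pointwise ENNReal

namespace MeasureTheory

section Holder

variable {α : Type*} [MeasurableSpace α] {μ : Measure α} {f : α → ℝ≥0∞}

theorem setLIntegral_le_eLpNorm_mul_measure_rpow (hf : AEMeasurable f μ) (s : Set α)
    {p : ℝ≥0∞} (hp : 1 ≤ p) :
    ∫⁻ x in s, f x ∂μ ≤ eLpNorm f p μ * μ s ^ (1 - 1 / p.toReal) := by
  have h := eLpNorm_le_eLpNorm_mul_rpow_measure_univ hp
    (hf.restrict (s := s)).aestronglyMeasurable
  simp only [eLpNorm_one_eq_lintegral_enorm, enorm_eq_self, ENNReal.toReal_one, div_one,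
    restrict_apply_univ] at h
  exact h.trans (mul_le_mul_left (eLpNorm_restrict_le f p μ s) _)

theorem rpow_lintegral_le_measure_univ_rpow_mul_lintegral_rpow (hf : AEMeasurable f μ)
    {p : ℝ} (hp : 1 ≤ p) :
    (∫⁻ x, f x ∂μ) ^ p ≤ μ univ ^ (p - 1) * ∫⁻ x, f x ^ p ∂μ := by
  have hp0 : 0 < p := zero_lt_one.trans_le hp
  have h := setLIntegral_le_eLpNorm_mul_measure_rpow hf univ (p := ENNReal.ofReal p)
    (by simpa using hp)
  rw [setLIntegral_univ, eLpNorm_eq_lintegral_rpow_enorm_toReal (by simpa using hp0)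
    ENNReal.ofReal_ne_top, ENNReal.toReal_ofReal hp0.le] at h
  calc (∫⁻ x, f x ∂μ) ^ p
      ≤ ((∫⁻ x, f x ^ p ∂μ) ^ (1 / p) * μ univ ^ (1 - 1 / p)) ^ p := by
        simpa using ENNReal.rpow_le_rpow h hp0.le
    _ = μ univ ^ (p - 1) * ∫⁻ x, f x ^ p ∂μ := by
        rw [ENNReal.mul_rpow_of_nonneg _ _ hp0.le, ← ENNReal.rpow_mul, ← ENNReal.rpow_mul,
          one_div_mul_cancel hp0.ne', ENNReal.rpow_one, sub_mul, one_div_mul_cancel hp0.ne',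
          one_mul, mul_comm]

end Holder

theorem Measure.measure_mul_measure_le_mconv_apply {M : Type*} [Monoid M] [MeasurableSpace M]
    [MeasurableMul₂ M] (μ ν : Measure M) [SFinite ν] (s t : Set M) :
    μ s * ν t ≤ (μ ∗ₘ ν) (s * t) := by
  rw [← prod_prod]
  calc μ.prod ν (s ×ˢ t) ≤ μ.prod ν ((fun x : M × M ↦ x.1 * x.2) ⁻¹' (s * t)) :=
        measure_mono fun x hx ↦ mul_mem_mul hx.1 hx.2
    _ ≤ (μ ∗ₘ ν) (s * t) := le_map_apply (by fun_prop) _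

section Convolution

variable {G : Type*} [Group G] [MeasurableSpace G] [MeasurableMul₂ G] [MeasurableInv G]
  {μ : Measure G} {f g : G → ℝ≥0∞}

theorem mlconvolution_eq_lintegral_withDensity (hf : Measurable f) (hg : Measurable g) (x : G) :
    (f ⋆ₘₗ[μ] g) x = ∫⁻ y, g (y⁻¹ * x) ∂μ.withDensity f :=
  (lintegral_withDensity_eq_lintegral_mul _ hf (by fun_prop)).symm

theorem ofReal_integral_mul_eq_mlconvolution {f g : G → ℝ} (hf : Measurable f)
    (hg : Measurable g) (hf0 : 0 ≤ f) (hg0 : 0 ≤ g) {x : G}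
    (hx : ((fun y ↦ ENNReal.ofReal (f y)) ⋆ₘₗ[μ] fun y ↦ ENNReal.ofReal (g y)) x ≠ ∞) :
    ENNReal.ofReal (∫ y, f y * g (y⁻¹ * x) ∂μ)
      = ((fun y ↦ ENNReal.ofReal (f y)) ⋆ₘₗ[μ] fun y ↦ ENNReal.ofReal (g y)) x := by
  have hmul : ∀ y, ENNReal.ofReal (f y * g (y⁻¹ * x))
      = ENNReal.ofReal (f y) * ENNReal.ofReal (g (y⁻¹ * x)) :=
    fun y ↦ ENNReal.ofReal_mul (hf0 y)
  have hint : Integrable (fun y ↦ f y * g (y⁻¹ * x)) μ := by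
    refine ⟨by fun_prop, ?_⟩
    simp only [HasFiniteIntegral, Real.enorm_eq_ofReal (mul_nonneg (hf0 _) (hg0 _)), hmul]
    exact hx.lt_top
  rw [ofReal_integral_eq_lintegral_ofReal hint (ae_of_all _ fun y ↦ mul_nonneg (hf0 y) (hg0 _))]
  simp only [hmul]
  rfl

variable [SFinite μ] [IsMulLeftInvariant μ]

theorem lintegral_mlconvolution (hf : Measurable f) (hg : Measurable g) :
    ∫⁻ x, (f ⋆ₘₗ[μ] g) x ∂μ = (∫⁻ x, f x ∂μ) * ∫⁻ x, g x ∂μ := by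
  simp only [mlconvolution_def]
  rw [lintegral_lintegral_swap (by fun_prop), ← lintegral_mul_const'' _ hf.aemeasurable]
  refine lintegral_congr fun y ↦ ?_
  rw [lintegral_const_mul'' _ (by fun_prop), lintegral_mul_left_eq_self g y⁻¹]

theorem lintegral_mlconvolution_rpow_le (hf : Measurable f) (hg : Measurable g) {p : ℝ}
    (hp : 1 ≤ p) :
    ∫⁻ x, (f ⋆ₘₗ[μ] g) x ^ p ∂μ ≤ (∫⁻ x, f x ∂μ) ^ p * ∫⁻ x, g x ^ p ∂μ := by
  have hp0 : 0 ≤ p - 1 := sub_nonneg.2 hp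
  calc ∫⁻ x, (f ⋆ₘₗ[μ] g) x ^ p ∂μ
      ≤ ∫⁻ x, (∫⁻ y, f y ∂μ) ^ (p - 1) * (f ⋆ₘₗ[μ] fun y ↦ g y ^ p) x ∂μ := by
        refine lintegral_mono fun x ↦ ?_
        have hν : ∫⁻ y, f y ∂μ = μ.withDensity f univ := by
          rw [withDensity_apply _ MeasurableSet.univ, setLIntegral_univ]
        rw [mlconvolution_eq_lintegral_withDensity hf hg,
          mlconvolution_eq_lintegral_withDensity hf (by fun_prop), hν]
        exact rpow_lintegral_le_measure_univ_rpow_mul_lintegral_rpow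
          (f := fun y ↦ g (y⁻¹ * x)) (by fun_prop) hp
    _ = (∫⁻ x, f x ∂μ) ^ p * ∫⁻ x, g x ^ p ∂μ := by
        rw [lintegral_const_mul _ (by fun_prop), lintegral_mlconvolution hf (by fun_prop),
          ← mul_assoc]
        congr 1
        conv_rhs => rw [← sub_add_cancel p 1]
        rw [ENNReal.rpow_add_of_nonneg _ _ hp0 zero_le_one, ENNReal.rpow_one]

theorem eLpNorm_mlconvolution_le (hf : Measurable f) (hg : Measurable g) {p : ℝ≥0∞}
    (hp : 1 ≤ p) (hp_top : p ≠ ∞) :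
    eLpNorm (f ⋆ₘₗ[μ] g) p μ ≤ (∫⁻ x, f x ∂μ) * eLpNorm g p μ := by
  have hp0 : 0 < p.toReal := ENNReal.toReal_pos (by positivity) hp_top
  simp only [eLpNorm_eq_lintegral_rpow_enorm_toReal (zero_lt_one.trans_le hp).ne' hp_top,
    enorm_eq_self]
  calc (∫⁻ x, (f ⋆ₘₗ[μ] g) x ^ p.toReal ∂μ) ^ (1 / p.toReal)
      ≤ ((∫⁻ x, f x ∂μ) ^ p.toReal * ∫⁻ x, g x ^ p.toReal ∂μ) ^ (1 / p.toReal) := by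
        gcongr
        exact lintegral_mlconvolution_rpow_le hf hg (by simpa using ENNReal.toReal_mono hp_top hp)
    _ = _ := by
        rw [ENNReal.mul_rpow_of_nonneg _ _ (by positivity), ← ENNReal.rpow_mul,
          mul_one_div_cancel hp0.ne', ENNReal.rpow_one]

theorem setLIntegral_mul_setLIntegral_le_setLIntegral_mlconvolution (hf : Measurable f)
    (hg : Measurable g) (s t : Set G) :
    (∫⁻ x in s, f x ∂μ) * ∫⁻ x in t, g x ∂μ ≤ ∫⁻ x in s * t, (f ⋆ₘₗ[μ] g) x ∂μ := by
  simp only [← withDensity_apply', ← mconv_withDensity_eq_mlconvolution hf hg]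
  exact measure_mul_measure_le_mconv_apply _ _ s t

theorem eLpNorm_integral_mul_eq_eLpNorm_mlconvolution {f g : G → ℝ} (hf : Measurable f)
    (hg : Measurable g) (hf0 : 0 ≤ f) (hg0 : 0 ≤ g) (hfi : Integrable f μ)
    (hgi : Integrable g μ) (p : ℝ≥0∞) :
    eLpNorm (fun x ↦ ∫ y, f y * g (y⁻¹ * x) ∂μ) p μ
      = eLpNorm ((fun y ↦ ENNReal.ofReal (f y)) ⋆ₘₗ[μ] fun y ↦ ENNReal.ofReal (g y)) p μ := by
  have hfin : ∫⁻ x, ((fun y ↦ ENNReal.ofReal (f y)) ⋆ₘₗ[μ] fun y ↦ ENNReal.ofReal (g y)) x ∂μ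
      ≠ ∞ := by
    rw [lintegral_mlconvolution (by fun_prop) (by fun_prop)]
    exact ENNReal.mul_ne_top hfi.lintegral_lt_top.ne hgi.lintegral_lt_top.ne
  refine eLpNorm_congr_enorm_ae ?_
  filter_upwards [ae_lt_top (by fun_prop) hfin] with x hx
  rw [Real.enorm_eq_ofReal (integral_nonneg fun y ↦ mul_nonneg (hf0 y) (hg0 _)),
    ofReal_integral_mul_eq_mlconvolution hf hg hf0 hg0 hx.ne, enorm_eq_self]

theorem setIntegral_mul_setIntegral_le_eLpNorm_mul_sqrt {f g : G → ℝ} (hf : Measurable f)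
    (hg : Measurable g) (hf0 : 0 ≤ f) (hg0 : 0 ≤ g) (hfi : Integrable f μ)
    (hgi : Integrable g μ) (hfg : eLpNorm (fun x ↦ ∫ y, f y * g (y⁻¹ * x) ∂μ) 2 μ ≠ ∞)
    {s t : Set G} (hst : μ (s * t) ≠ ∞) :
    (∫ x in s, f x ∂μ) * ∫ x in t, g x ∂μ
      ≤ (eLpNorm (fun x ↦ ∫ y, f y * g (y⁻¹ * x) ∂μ) 2 μ).toReal * √(μ (s * t)).toReal := by
  have hF := hf.ennreal_ofReal
  have hG := hg.ennreal_ofReal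
  have h := (setLIntegral_mul_setLIntegral_le_setLIntegral_mlconvolution hF hG s t).trans
    (setLIntegral_le_eLpNorm_mul_measure_rpow (measurable_mlconvolution μ hF hG).aemeasurable
      (s * t) one_le_two)
  simp only [← ofReal_integral_eq_lintegral_ofReal hfi.restrict (ae_of_all _ hf0),
    ← ofReal_integral_eq_lintegral_ofReal hgi.restrict (ae_of_all _ hg0),
    ← eLpNorm_integral_mul_eq_eLpNorm_mlconvolution hf hg hf0 hg0 hfi hgi] at h
  have h := ENNReal.toReal_mono
    (ENNReal.mul_ne_top hfg (ENNReal.rpow_ne_top_of_nonneg (by norm_num) hst)) h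
  rw [ENNReal.toReal_mul, ENNReal.toReal_mul, ← ENNReal.toReal_rpow,
    ENNReal.toReal_ofReal (setIntegral_nonneg_of_ae (ae_of_all _ hf0)),
    ENNReal.toReal_ofReal (setIntegral_nonneg_of_ae (ae_of_all _ hg0))] at h
  rw [Real.sqrt_eq_rpow]
  convert h using 3
  norm_num

end Convolution

end MeasureTheory

theorem inv_pow_three_mul_le_of_sq_le_mul_sqrt {K a N n s t : ℝ} (hK : 1 ≤ K) (ha : 1 / K < a)
    (h : a ^ 2 ≤ N * √s) (hs : s ≤ K * t) (ht : t ≤ K * n⁻¹ ^ 2) : K⁻¹ ^ 3 * n ≤ N := by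
  have hK0 : 0 < K := zero_lt_one.trans_le hK
  have ha2 : K⁻¹ ^ 2 < a ^ 2 := pow_lt_pow_left₀ (by rwa [← one_div]) (by positivity) two_ne_zero
  have hN : 0 < N :=
    pos_of_mul_pos_left ((by positivity : (0 : ℝ) < K⁻¹ ^ 2).trans (ha2.trans_le h))
      (Real.sqrt_nonneg s)
  rcases le_or_gt n 0 with hn | hn
  · exact (mul_nonpos_of_nonneg_of_nonpos (by positivity) hn).trans hN.le
  have hsqrt : √s ≤ K * n⁻¹ := by
    rw [← Real.sqrt_sq (by positivity : 0 ≤ K * n⁻¹)]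
    exact Real.sqrt_le_sqrt (by nlinarith)
  have hKn : K⁻¹ ^ 2 < N * (K * n⁻¹) :=
    ha2.trans_le (h.trans (mul_le_mul_of_nonneg_left hsqrt hN.le))
  have := mul_lt_mul_of_pos_right hKn (by positivity : 0 < n * K⁻¹)
  field_simp at this ⊢
  linarith

theorem stmt8_general {G : Type*} [Group G] [TopologicalSpace G] [IsTopologicalGroup G]
    [LocallyCompactSpace G] [SecondCountableTopology G] [MeasurableSpace G] [BorelSpace G]
    (m : Measure G) [m.IsHaarMeasure]
    (f : G → ℝ) (hfmeas : Measurable f) (hf0 : ∀ x, 0 ≤ f x)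
    (hf1 : ∫ x, f x ∂m = 1) (hf2 : MemLp f 2 m)
    (A : Set G) (hAfin : m A < ⊤) :
    (∫ x in A, f x ∂m) ^ 2 / Real.sqrt ((m (A * A)).toReal)
        ≤ (eLpNorm (fun x => ∫ y, f y * f (y⁻¹ * x) ∂m) 2 m).toReal ∧
    ∀ K : ℝ, 1 ≤ K →
      1 / K < ∫ x in A, f x ∂m →
      m (A * A) ≤ ENNReal.ofReal K * m A →
      (m A).toReal ≤ K * ((eLpNorm f 2 m).toReal) ⁻¹ ^ 2 →
      K⁻¹ ^ 3 * (eLpNorm f 2 m).toReal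
        ≤ (eLpNorm (fun x => ∫ y, f y * f (y⁻¹ * x) ∂m) 2 m).toReal := by
  have hfi : Integrable f m := integrable_of_integral_eq_one hf1
  have hF := hfmeas.ennreal_ofReal
  have hL2 : eLpNorm (fun x ↦ ∫ y, f y * f (y⁻¹ * x) ∂m) 2 m ≠ ∞ := by
    rw [eLpNorm_integral_mul_eq_eLpNorm_mlconvolution hfmeas hfmeas hf0 hf0 hfi hfi]
    refine ((eLpNorm_mlconvolution_le hF hF one_le_two ENNReal.ofNat_ne_top).trans_lt ?_).ne
    rw [eLpNorm_congr_enorm_ae (ae_of_all _ fun x ↦ (Real.enorm_eq_ofReal (hf0 x)).symm)]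
    exact ENNReal.mul_lt_top hfi.lintegral_lt_top hf2.2
  have hsq (hAA : m (A * A) ≠ ∞) : (∫ x in A, f x ∂m) ^ 2
      ≤ (eLpNorm (fun x => ∫ y, f y * f (y⁻¹ * x) ∂m) 2 m).toReal * √(m (A * A)).toReal :=
    sq (∫ x in A, f x ∂m) ▸ setIntegral_mul_setIntegral_le_eLpNorm_mul_sqrt hfmeas hfmeas
      hf0 hf0 hfi hfi hL2 hAA
  refine ⟨?_, fun K hK hA_int hAA hmA ↦ ?_⟩
  · rcases eq_or_ne (m (A * A)) ∞ with h | h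
    · simp [h]
    · exact div_le_of_le_mul₀ (Real.sqrt_nonneg _) ENNReal.toReal_nonneg (hsq h)
  · have hAA_fin : m (A * A) ≠ ∞ :=
      ne_top_of_le_ne_top (ENNReal.mul_ne_top ENNReal.ofReal_ne_top hAfin.ne) hAA
    refine inv_pow_three_mul_le_of_sq_le_mul_sqrt hK hA_int (hsq hAA_fin) ?_ hmA
    have h := ENNReal.toReal_mono (ENNReal.mul_ne_top ENNReal.ofReal_ne_top hAfin.ne) hAA
    rwa [ENNReal.toReal_mul, ENNReal.toReal_ofReal (zero_le_one.trans hK)] at h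

/-- On a unimodular locally compact group with Haar measure `m`, for a probability density
`f ∈ L²(G)` and a measurable set `A`: `‖f*f‖₂ ≥ m(A·A)^{-1/2} (∫_A f dm)²`; consequently,
if `∫_A f dm > 1/K`, `m(A·A) ≤ K m(A)` and `m(A) ≤ K ‖f‖₂^{-2}`, then
`‖f*f‖₂ ≥ K⁻³ ‖f‖₂`. -/
theorem stmt8 {G : Type*} [Group G] [TopologicalSpace G] [IsTopologicalGroup G]
    [LocallyCompactSpace G] [SecondCountableTopology G] [MeasurableSpace G] [BorelSpace G]
    (m : Measure G) [m.IsHaarMeasure] [m.IsMulRightInvariant]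
    (f : G → ℝ) (hfmeas : Measurable f) (hf0 : ∀ x, 0 ≤ f x)
    (hf1 : ∫ x, f x ∂m = 1) (hf2 : MemLp f 2 m)
    (A : Set G) (hA : MeasurableSet A) (hApos : 0 < m A) (hAfin : m A < ⊤) :
    (∫ x in A, f x ∂m) ^ 2 / Real.sqrt ((m (A * A)).toReal)
        ≤ (eLpNorm (fun x => ∫ y, f y * f (y⁻¹ * x) ∂m) 2 m).toReal ∧
    ∀ K : ℝ, 1 ≤ K →
      1 / K < ∫ x in A, f x ∂m →
      m (A * A) ≤ ENNReal.ofReal K * m A →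
      (m A).toReal ≤ K * ((eLpNorm f 2 m).toReal) ⁻¹ ^ 2 →
      K⁻¹ ^ 3 * (eLpNorm f 2 m).toReal
        ≤ (eLpNorm (fun x => ∫ y, f y * f (y⁻¹ * x) ∂m) 2 m).toReal :=
  stmt8_general m f hfmeas hf0 hf1 hf2 A hAfin
end
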